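/- arXiv:1005.1972 — 2 statements merged into one kernel-verified Lean document; each statement's English description precedes it below -/
import Mathlib

section
/- The equivalence relation ∼ on ℤ^d has only finitely many equivalence classes: there exists a finite subset S ⊆ ℤ^d such that every a ∈ ℤ^d satisfies a ∼ s for some s ∈ S. -/
/-
The relation `∼` only depends on finitely much data. Membership in `ℕA + G` is a property of
the class modulo `G`, and the relevant `l` are exactly those whose class in `ℤ^d ⧸ G` is torsion.
So for a fixed subgroup `G` the condition on `x` is determined by the set of torsion classes `t`
with `x - t ∈ ℕA + G`, a subset of the finite torsion subgroup of the finitely generated group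
`ℤ^d ⧸ G`. Finally, `G_φ` is generated by the `aᵢ` with `φ(aᵢ) = 0`, so only finitely many
subgroups `G_φ` occur.
-/

open Pointwise

/-- The submonoid `ℕA` of `ℤ^d` generated by `a₁,…,a_n`. -/
def NA {d n : ℕ} (a : Fin n → Fin d → ℤ) : AddSubmonoid (Fin d → ℤ) :=
  AddSubmonoid.closure (Set.range a)

/-- The subgroup `G_φ = ℤ(A ∩ τ)` generated by the face `M_φ = {x ∈ ℕA : φ x = 0}`. -/
def Gface {d n : ℕ} (a : Fin n → Fin d → ℤ) (φ : (Fin d → ℤ) →+ ℤ) :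
    AddSubgroup (Fin d → ℤ) :=
  AddSubgroup.closure {x | x ∈ NA a ∧ φ x = 0}

/-- The set `ℕA + G_φ ⊆ ℤ^d`. -/
def faceSum {d n : ℕ} (a : Fin n → Fin d → ℤ) (φ : (Fin d → ℤ) →+ ℤ) :
    Set (Fin d → ℤ) :=
  (NA a : Set (Fin d → ℤ)) + (Gface a φ : Set (Fin d → ℤ))

/-- The relation `x ∼ y`: `E_τ(x) = E_τ(y)` for all faces `τ`. -/
def sim {d n : ℕ} (a : Fin n → Fin d → ℤ) (x y : Fin d → ℤ) : Prop :=
  ∀ φ : (Fin d → ℤ) →+ ℤ, (∀ i, 0 ≤ φ (a i)) →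
    ∀ l : Fin d → ℤ, (∃ k : ℕ, 1 ≤ k ∧ (k : ℤ) • l ∈ Gface a φ) →
      (x - l ∈ faceSum a φ ↔ y - l ∈ faceSum a φ)

open QuotientAddGroup

theorem AddCommGroup.finite_torsion_of_fg (M : Type*) [AddCommGroup M] [AddGroup.FG M] :
    Finite (AddCommGroup.torsion M) := by
  have : Module.Finite ℤ M := Module.Finite.iff_addGroup_fg.mpr ‹_›
  have := Module.finite_of_fg_torsion _ (Submodule.torsion_isTorsion (R := ℤ) (M := M))
  rw [← Submodule.torsion_int]
  exact this

theorem exists_finset_forall_exists_eq {α β : Type*} [Finite β] (f : α → β) :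
    ∃ S : Finset α, ∀ x, ∃ s ∈ S, f x = f s := by
  choose g hg using fun b : Set.range f => b.2
  refine ⟨(Set.finite_range g).toFinset, fun x => ⟨g ⟨f x, x, rfl⟩, by simp, ?_⟩⟩
  exact (hg ⟨f x, x, rfl⟩).symm

section TorsionFingerprint

variable {M : Type*} [AddCommGroup M]

theorem mem_add_addSubgroup_iff (X : Set M) (G : AddSubgroup M) (x : M) :
    x ∈ X + (G : Set M) ↔ (x : M ⧸ G) ∈ mk '' X := by
  rw [← Set.mem_preimage, preimage_image_mk_eq_add]

def torsionFingerprint (X : Set M) (G : AddSubgroup M) (x : M) :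
    Set (AddCommGroup.torsion (M ⧸ G)) :=
  {t | (x : M ⧸ G) - t ∈ mk '' X}

theorem sub_mem_add_iff_of_torsionFingerprint_eq {X : Set M} {G : AddSubgroup M} {x y : M}
    (h : torsionFingerprint X G x = torsionFingerprint X G y) {l : M} {k : ℕ} (hk : 1 ≤ k)
    (hl : (k : ℤ) • l ∈ G) :
    x - l ∈ X + (G : Set M) ↔ y - l ∈ X + (G : Set M) := by
  have hkl : k • (l : M ⧸ G) = 0 := by
    rw [← mk_nsmul, eq_zero_iff, ← natCast_zsmul]
    exact hl
  let t : AddCommGroup.torsion (M ⧸ G) :=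
    ⟨l, isOfFinAddOrder_iff_nsmul_eq_zero.mpr ⟨k, hk, hkl⟩⟩
  have key : ∀ z : M, z - l ∈ X + (G : Set M) ↔ t ∈ torsionFingerprint X G z := fun z =>
    mem_add_addSubgroup_iff X G (z - l)
  rw [key, key, h]

end TorsionFingerprint

section FaceFingerprint

variable {d n : ℕ} (a : Fin n → Fin d → ℤ)

theorem map_nonneg_of_mem_NA {φ : (Fin d → ℤ) →+ ℤ} (hφ : ∀ i, 0 ≤ φ (a i))
    {x : Fin d → ℤ} (hx : x ∈ NA a) : 0 ≤ φ x := by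
  induction hx using AddSubmonoid.closure_induction with
  | mem y hy => obtain ⟨i, rfl⟩ := hy; exact hφ i
  | zero => simp
  | add y z _ _ hy hz => rw [map_add]; exact add_nonneg hy hz

theorem Gface_eq_closure_image {φ : (Fin d → ℤ) →+ ℤ} (hφ : ∀ i, 0 ≤ φ (a i)) :
    Gface a φ = AddSubgroup.closure (a '' {i | φ (a i) = 0}) := by
  apply le_antisymm
  · rw [Gface, AddSubgroup.closure_le]
    rintro x ⟨hx, hφx⟩
    induction hx using AddSubmonoid.closure_induction with
    | mem y hy =>
      obtain ⟨i, rfl⟩ := hy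
      exact AddSubgroup.subset_closure ⟨i, hφx, rfl⟩
    | zero => exact zero_mem _
    | add y z hyA hzA hy hz =>
      have hy0 := map_nonneg_of_mem_NA a hφ hyA
      have hz0 := map_nonneg_of_mem_NA a hφ hzA
      rw [map_add] at hφx
      exact add_mem (hy (by omega)) (hz (by omega))
  · rw [AddSubgroup.closure_le]
    rintro x ⟨i, hi, rfl⟩
    exact AddSubgroup.subset_closure ⟨AddSubmonoid.subset_closure ⟨i, rfl⟩, hi⟩

def faceFingerprint (x : Fin d → ℤ) (F : Set (Fin n)) :
    Set (AddCommGroup.torsion ((Fin d → ℤ) ⧸ AddSubgroup.closure (a '' F))) :=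
  torsionFingerprint (NA a) (AddSubgroup.closure (a '' F)) x

theorem sim_of_faceFingerprint_eq {x y : Fin d → ℤ}
    (h : faceFingerprint a x = faceFingerprint a y) : sim a x y := by
  rintro φ hφ l ⟨k, hk, hkl⟩
  rw [Gface_eq_closure_image a hφ] at hkl
  rw [faceSum, Gface_eq_closure_image a hφ]
  exact sub_mem_add_iff_of_torsionFingerprint_eq (congrFun h _) hk hkl

end FaceFingerprint

theorem sim_finitely_many_classes_general {d n : ℕ} (a : Fin n → Fin d → ℤ) :
    ∃ S : Finset (Fin d → ℤ), ∀ x : Fin d → ℤ, ∃ s ∈ S, sim a x s := by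
  have : AddGroup.FG (Fin d → ℤ) := Module.Finite.iff_addGroup_fg.mp inferInstance
  have (F : Set (Fin n)) :=
    AddCommGroup.finite_torsion_of_fg ((Fin d → ℤ) ⧸ AddSubgroup.closure (a '' F))
  obtain ⟨S, hS⟩ := exists_finset_forall_exists_eq (faceFingerprint a)
  exact ⟨S, fun x => (hS x).imp fun _ ⟨hs, h⟩ => ⟨hs, sim_of_faceFingerprint_eq a h⟩⟩

/-- The relation `∼` has only finitely many equivalence classes:
there is a finite set `S ⊆ ℤ^d` such that every `x ∈ ℤ^d` satisfies `x ∼ s` for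
some `s ∈ S`. -/
theorem sim_finitely_many_classes {d n : ℕ} (hd : 0 < d) (hn : 0 < n)
    (a : Fin n → Fin d → ℤ) (hgen : AddSubgroup.closure (Set.range a) = ⊤) :
    ∃ S : Finset (Fin d → ℤ), ∀ x : Fin d → ℤ, ∃ s ∈ S, sim a x s :=
  sim_finitely_many_classes_general a
end

section
/- The following equality of subsets of ℤ³ holds: (M + G(a₁,a₂)) ∩ [ (M + G(a₁,a₃)) ∪ (M + G(a₂,a₄)) ∪ (M + G(a₃,a₄)) ] = (M + G(a₁,a₂)) ∩ [ (M + ℤa₁) ∪ (M + ℤa₂) ]. Equivalently, the sector P_∇ for the filter ∇ = {σ₁₂, ℝ_{≥0}A} satisfies P_∇ = (M + G(a₁,a₂)) \ [ (M + ℤa₁) ∪ (M + ℤa₂) ]. -/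
/-!
Hartshorne's example: `a₁ = (1,0,0)`, `a₂ = (1,1,0)`, `a₃ = (1,0,1)`, `a₄ = (1,1,1)`
in `ℤ³`, `M` the submonoid they generate (so `K[M] = K[r,rs,rt,rst]`), `ℤv` the subgroup
generated by a vector `v`, and `G(v,w)` the subgroup generated by `v, w`.
-/

open Pointwise

/-- `a₁ = (1,0,0)`. -/
def a1 : Fin 3 → ℤ := ![1, 0, 0]
/-- `a₂ = (1,1,0)`. -/
def a2 : Fin 3 → ℤ := ![1, 1, 0]
/-- `a₃ = (1,0,1)`. -/
def a3 : Fin 3 → ℤ := ![1, 0, 1]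
/-- `a₄ = (1,1,1)`. -/
def a4 : Fin 3 → ℤ := ![1, 1, 1]

/-- The submonoid `M` of `ℤ³` generated by `a₁, a₂, a₃, a₄`. -/
def Mmon : AddSubmonoid (Fin 3 → ℤ) := AddSubmonoid.closure {a1, a2, a3, a4}

/-- The subgroup `ℤv` of `ℤ³` generated by `v`. -/
def Zv (v : Fin 3 → ℤ) : AddSubgroup (Fin 3 → ℤ) := AddSubgroup.closure {v}

/-- The subgroup `G(v,w)` of `ℤ³` generated by `v` and `w`. -/
def Gvw (v w : Fin 3 → ℤ) : AddSubgroup (Fin 3 → ℤ) := AddSubgroup.closure {v, w}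


/-!
`M` is normal: it is the set of lattice points of its cone, `0 ≤ x₁, x₂ ≤ x₀`. Adding the
group spanned by a face of the cone cancels exactly the facet inequalities of the facets not
containing that face, so each `M + G(…)` and `M + ℤaᵢ` is cut out by the inequalities of the
facets through the face. Both equalities are then linear arithmetic: inside `x₂ ≥ 0` the union
`x₁ ≥ 0 ∨ x₁ ≤ x₀ ∨ x₂ ≤ x₀` is already `x₁ ≥ 0 ∨ x₁ ≤ x₀`, as `x₁ < 0 < x₁ - x₀` would force
`x₀ < 0 ≤ x₂`.
-/

theorem AddSubmonoid.zsmul_mem_of_nonneg {G : Type*} [AddGroup G] (S : AddSubmonoid G) {v : G}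
    (hv : v ∈ S) {k : ℤ} (hk : 0 ≤ k) : k • v ∈ S := by
  lift k to ℕ using hk
  rw [natCast_zsmul]
  exact S.nsmul_mem hv k

theorem Set.mem_add_addSubgroup_iff {G : Type*} [AddCommGroup G] {S : Set G}
    {H : AddSubgroup G} {x : G} : x ∈ S + (H : Set G) ↔ ∃ h ∈ H, x - h ∈ S := by
  constructor
  · rintro ⟨m, hm, h, hh, rfl⟩
    exact ⟨h, hh, by simpa using hm⟩
  · rintro ⟨h, hh, hx⟩
    exact ⟨x - h, hx, h, hh, sub_add_cancel x h⟩

theorem mem_Mmon_iff {x : Fin 3 → ℤ} :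
    x ∈ Mmon ↔ 0 ≤ x 1 ∧ 0 ≤ x 2 ∧ x 1 ≤ x 0 ∧ x 2 ≤ x 0 := by
  constructor
  · intro hx
    induction hx using AddSubmonoid.closure_induction with
    | mem v hv => rcases hv with rfl | rfl | rfl | rfl <;> simp [a1, a2, a3, a4]
    | zero => simp
    | add y z _ _ hy hz => simp only [Pi.add_apply]; omega
  · rintro ⟨h1, h2, h01, h02⟩
    have hx : x = (x 0 - x 1 - x 2 + min (x 1) (x 2)) • a1 + (x 1 - min (x 1) (x 2)) • a2 +
        (x 2 - min (x 1) (x 2)) • a3 + min (x 1) (x 2) • a4 := by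
      funext i
      fin_cases i <;> (simp [a1, a2, a3, a4]; try omega)
    have gen {v} (hv : v ∈ ({a1, a2, a3, a4} : Set (Fin 3 → ℤ))) {k : ℤ} (hk : 0 ≤ k) :
        k • v ∈ Mmon :=
      Mmon.zsmul_mem_of_nonneg (AddSubmonoid.subset_closure hv) hk
    rw [hx]
    refine add_mem (add_mem (add_mem (gen ?_ ?_) (gen ?_ ?_)) (gen ?_ ?_)) (gen ?_ ?_) <;>
      first | omega | simp

theorem mem_Mmon_add_Gvw_iff {v w x : Fin 3 → ℤ} :
    x ∈ (Mmon : Set (Fin 3 → ℤ)) + (Gvw v w : Set (Fin 3 → ℤ)) ↔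
      ∃ m n : ℤ, x - (m • v + n • w) ∈ Mmon := by
  simp [Set.mem_add_addSubgroup_iff, Gvw, AddSubgroup.mem_closure_pair]

theorem mem_Mmon_add_Zv_iff {v x : Fin 3 → ℤ} :
    x ∈ (Mmon : Set (Fin 3 → ℤ)) + (Zv v : Set (Fin 3 → ℤ)) ↔ ∃ m : ℤ, x - m • v ∈ Mmon := by
  simp [Set.mem_add_addSubgroup_iff, Zv, AddSubgroup.mem_closure_singleton]

theorem Mmon_add_Gvw_a1_a2 :
    (Mmon : Set (Fin 3 → ℤ)) + (Gvw a1 a2 : Set (Fin 3 → ℤ)) = {x | 0 ≤ x 2} := by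
  ext x
  simp only [mem_Mmon_add_Gvw_iff, mem_Mmon_iff, Set.mem_ofPred_eq, Pi.sub_apply, Pi.add_apply,
    Pi.smul_apply, smul_eq_mul, a1, a2, Matrix.cons_val]
  constructor
  · rintro ⟨m, n, h⟩
    omega
  · intro h
    exact ⟨x 0 - x 1 - x 2, x 1, by omega⟩

theorem Mmon_add_Gvw_a1_a3 :
    (Mmon : Set (Fin 3 → ℤ)) + (Gvw a1 a3 : Set (Fin 3 → ℤ)) = {x | 0 ≤ x 1} := by
  ext x
  simp only [mem_Mmon_add_Gvw_iff, mem_Mmon_iff, Set.mem_ofPred_eq, Pi.sub_apply, Pi.add_apply,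
    Pi.smul_apply, smul_eq_mul, a1, a3, Matrix.cons_val]
  constructor
  · rintro ⟨m, n, h⟩
    omega
  · intro h
    exact ⟨x 0 - x 1 - x 2, x 2, by omega⟩

theorem Mmon_add_Gvw_a2_a4 :
    (Mmon : Set (Fin 3 → ℤ)) + (Gvw a2 a4 : Set (Fin 3 → ℤ)) = {x | x 1 ≤ x 0} := by
  ext x
  simp only [mem_Mmon_add_Gvw_iff, mem_Mmon_iff, Set.mem_ofPred_eq, Pi.sub_apply, Pi.add_apply,
    Pi.smul_apply, smul_eq_mul, a2, a4, Matrix.cons_val]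
  constructor
  · rintro ⟨m, n, h⟩
    omega
  · intro h
    exact ⟨x 1 - x 2, x 2, by omega⟩

theorem Mmon_add_Gvw_a3_a4 :
    (Mmon : Set (Fin 3 → ℤ)) + (Gvw a3 a4 : Set (Fin 3 → ℤ)) = {x | x 2 ≤ x 0} := by
  ext x
  simp only [mem_Mmon_add_Gvw_iff, mem_Mmon_iff, Set.mem_ofPred_eq, Pi.sub_apply, Pi.add_apply,
    Pi.smul_apply, smul_eq_mul, a3, a4, Matrix.cons_val]
  constructor
  · rintro ⟨m, n, h⟩
    omega
  · intro h
    exact ⟨x 2 - x 1, x 1, by omega⟩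

theorem Mmon_add_Zv_a1 :
    (Mmon : Set (Fin 3 → ℤ)) + (Zv a1 : Set (Fin 3 → ℤ)) = {x | 0 ≤ x 1 ∧ 0 ≤ x 2} := by
  ext x
  simp only [mem_Mmon_add_Zv_iff, mem_Mmon_iff, Set.mem_ofPred_eq, Pi.sub_apply,
    Pi.smul_apply, smul_eq_mul, a1, Matrix.cons_val]
  constructor
  · rintro ⟨m, h⟩
    omega
  · intro h
    exact ⟨x 0 - x 1 - x 2, by omega⟩

theorem Mmon_add_Zv_a2 :
    (Mmon : Set (Fin 3 → ℤ)) + (Zv a2 : Set (Fin 3 → ℤ)) = {x | 0 ≤ x 2 ∧ x 1 ≤ x 0} := by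
  ext x
  simp only [mem_Mmon_add_Zv_iff, mem_Mmon_iff, Set.mem_ofPred_eq, Pi.sub_apply,
    Pi.smul_apply, smul_eq_mul, a2, Matrix.cons_val]
  constructor
  · rintro ⟨m, h⟩
    omega
  · intro h
    exact ⟨min (x 1) (x 0 - x 2), by omega⟩

/-- The equality of subsets of `ℤ³`:
`(M+G(a₁,a₂)) ∩ [(M+G(a₁,a₃)) ∪ (M+G(a₂,a₄)) ∪ (M+G(a₃,a₄))]
  = (M+G(a₁,a₂)) ∩ [(M+ℤa₁) ∪ (M+ℤa₂)]`;
equivalently, the sector for the filter `∇ = {σ₁₂, ℝ₊A}` satisfies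
`P_∇ = (M+G(a₁,a₂)) \ [(M+ℤa₁) ∪ (M+ℤa₂)]`. -/
theorem hartshorne_sector_equality :
    (((Mmon : Set (Fin 3 → ℤ)) + (Gvw a1 a2 : Set (Fin 3 → ℤ))) ∩
        (((Mmon : Set (Fin 3 → ℤ)) + (Gvw a1 a3 : Set (Fin 3 → ℤ))) ∪
          ((Mmon : Set (Fin 3 → ℤ)) + (Gvw a2 a4 : Set (Fin 3 → ℤ))) ∪
          ((Mmon : Set (Fin 3 → ℤ)) + (Gvw a3 a4 : Set (Fin 3 → ℤ))))
      = ((Mmon : Set (Fin 3 → ℤ)) + (Gvw a1 a2 : Set (Fin 3 → ℤ))) ∩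
          (((Mmon : Set (Fin 3 → ℤ)) + (Zv a1 : Set (Fin 3 → ℤ))) ∪
            ((Mmon : Set (Fin 3 → ℤ)) + (Zv a2 : Set (Fin 3 → ℤ))))) ∧
    (((Mmon : Set (Fin 3 → ℤ)) + (Gvw a1 a2 : Set (Fin 3 → ℤ))) \
        (((Mmon : Set (Fin 3 → ℤ)) + (Gvw a1 a3 : Set (Fin 3 → ℤ))) ∪
          ((Mmon : Set (Fin 3 → ℤ)) + (Gvw a2 a4 : Set (Fin 3 → ℤ))) ∪
          ((Mmon : Set (Fin 3 → ℤ)) + (Gvw a3 a4 : Set (Fin 3 → ℤ))))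
      = ((Mmon : Set (Fin 3 → ℤ)) + (Gvw a1 a2 : Set (Fin 3 → ℤ))) \
          (((Mmon : Set (Fin 3 → ℤ)) + (Zv a1 : Set (Fin 3 → ℤ))) ∪
            ((Mmon : Set (Fin 3 → ℤ)) + (Zv a2 : Set (Fin 3 → ℤ))))) := by
  rw [Mmon_add_Gvw_a1_a2, Mmon_add_Gvw_a1_a3, Mmon_add_Gvw_a2_a4, Mmon_add_Gvw_a3_a4,
    Mmon_add_Zv_a1, Mmon_add_Zv_a2]
  constructor <;> ext x <;>
    simp only [Set.mem_inter_iff, Set.mem_sdiff, Set.mem_union, Set.mem_ofPred_eq] <;> omega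
end
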